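/- Let Z ∈ ℝ^{n×d}, λ > 0, and let Z = QR be a factorization with R ∈ ℝ^{d×d} invertible such that QᵀQ + λR^{-T}R^{-1} = I (a λ-QR factorization). If ‖QᵀSᵀSQ − QᵀQ‖₂ ≤ 1/2 for some S ∈ ℝ^{s×n}, then (1/2)(ZᵀZ + λI) ⪯ ZᵀSᵀSZ + λI ⪯ (3/2)(ZᵀZ + λI). -/

import Mathlib

open Matrix

/-- Let `Z = QR` be a λ-QR factorization (`R` invertible,
`QᵀQ + λR⁻ᵀR⁻¹ = I`). If `‖QᵀSᵀSQ − QᵀQ‖₂ ≤ 1/2` (expressed via the quadratic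
form of this symmetric matrix), then
`(1/2)(ZᵀZ + λI) ⪯ ZᵀSᵀSZ + λI ⪯ (3/2)(ZᵀZ + λI)`. -/
theorem lambda_qr_sketch_loewner (n d s : ℕ)
    (Z Q : Matrix (Fin n) (Fin d) ℝ) (Rm : Matrix (Fin d) (Fin d) ℝ)
    (S : Matrix (Fin s) (Fin n) ℝ) (lam : ℝ) (hlam : 0 < lam)
    (hZQR : Z = Q * Rm) (hRinv : IsUnit Rm)
    (hQR : Qᵀ * Q + lam • ((Rm⁻¹)ᵀ * Rm⁻¹) = (1 : Matrix (Fin d) (Fin d) ℝ))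
    (hnorm : ∀ v : Fin d → ℝ,
        |v ⬝ᵥ ((Qᵀ * Sᵀ * S * Q - Qᵀ * Q).mulVec v)| ≤ (1/2) * (v ⬝ᵥ v)) :
    ((Zᵀ * Sᵀ * S * Z + lam • (1 : Matrix (Fin d) (Fin d) ℝ)) -
      (1/2 : ℝ) • (Zᵀ * Z + lam • (1 : Matrix (Fin d) (Fin d) ℝ))).PosSemidef ∧
    ((3/2 : ℝ) • (Zᵀ * Z + lam • (1 : Matrix (Fin d) (Fin d) ℝ)) -
      (Zᵀ * Sᵀ * S * Z + lam • (1 : Matrix (Fin d) (Fin d) ℝ))).PosSemidef := by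
  set E : Matrix (Fin d) (Fin d) ℝ := Qᵀ * Sᵀ * S * Q - Qᵀ * Q with hE
  have hRR : Rm⁻¹ * Rm = 1 := nonsing_inv_mul _ ((isUnit_iff_isUnit_det _).mp hRinv)
  -- lam • 1 = Rmᵀ * (1 - QᵀQ) * Rm
  have hT : Rmᵀ * ((Rm⁻¹)ᵀ * Rm⁻¹) * Rm = 1 := by
    calc Rmᵀ * ((Rm⁻¹)ᵀ * Rm⁻¹) * Rm = (Rm⁻¹ * Rm)ᵀ * (Rm⁻¹ * Rm) := by
          simp only [transpose_mul, Matrix.mul_assoc]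
      _ = 1 := by rw [hRR]; simp
  have hlam1 : lam • (1 : Matrix (Fin d) (Fin d) ℝ)
      = Rmᵀ * ((1 : Matrix (Fin d) (Fin d) ℝ) - Qᵀ * Q) * Rm := by
    have h1 : (1 : Matrix (Fin d) (Fin d) ℝ) - Qᵀ * Q = lam • ((Rm⁻¹)ᵀ * Rm⁻¹) := by
      rw [← hQR, add_sub_cancel_left]
    rw [h1, Matrix.mul_smul, Matrix.smul_mul, hT]
  have hZtZ : Zᵀ * Z = Rmᵀ * (Qᵀ * Q) * Rm := by
    subst hZQR; simp only [transpose_mul, Matrix.mul_assoc]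
  have hZS : Zᵀ * Sᵀ * S * Z = Rmᵀ * (Qᵀ * Sᵀ * S * Q) * Rm := by
    subst hZQR; simp only [transpose_mul, Matrix.mul_assoc]
  have hEsymm : Eᵀ = E := by
    rw [hE]; simp [transpose_mul, Matrix.mul_assoc]
  have key : ∀ (N : Matrix (Fin d) (Fin d) ℝ), Nᵀ = N →
      (∀ x : Fin d → ℝ, 0 ≤ x ⬝ᵥ N.mulVec x) → (Rmᵀ * N * Rm).PosSemidef := by
    intro N hNs hNq
    have hN : N.PosSemidef := by
      refine posSemidef_iff_dotProduct_mulVec.mpr ⟨?_, ?_⟩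
      · rw [Matrix.IsHermitian, conjTranspose_eq_transpose_of_trivial, hNs]
      · intro x; simpa using hNq x
    simpa [conjTranspose_eq_transpose_of_trivial] using hN.conjTranspose_mul_mul_same Rm
  constructor
  · have heq : (Zᵀ * Sᵀ * S * Z + lam • (1 : Matrix (Fin d) (Fin d) ℝ)) -
        (1/2 : ℝ) • (Zᵀ * Z + lam • (1 : Matrix (Fin d) (Fin d) ℝ))
        = Rmᵀ * (E + (1/2 : ℝ) • 1) * Rm := by
      rw [hlam1, hZtZ, hZS, hE]
      simp only [Matrix.mul_sub, Matrix.sub_mul, Matrix.mul_add, Matrix.add_mul,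
        Matrix.mul_one, Matrix.one_mul, Matrix.mul_smul, Matrix.smul_mul]
      module
    rw [heq]
    refine key _ (by rw [transpose_add, hEsymm, transpose_smul, transpose_one]) fun x => ?_
    have h := hnorm x
    have hdd : 0 ≤ x ⬝ᵥ x := Finset.sum_nonneg fun i _ => mul_self_nonneg (x i)
    have : x ⬝ᵥ ((E + (1/2 : ℝ) • 1).mulVec x)
        = x ⬝ᵥ E.mulVec x + (1/2) * (x ⬝ᵥ x) := by
      rw [add_mulVec, dotProduct_add, smul_mulVec, one_mulVec, dotProduct_smul]
      simp [smul_eq_mul]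
    rw [this]
    have := abs_le.mp h
    linarith [this.1]
  · have heq : (3/2 : ℝ) • (Zᵀ * Z + lam • (1 : Matrix (Fin d) (Fin d) ℝ)) -
        (Zᵀ * Sᵀ * S * Z + lam • (1 : Matrix (Fin d) (Fin d) ℝ))
        = Rmᵀ * ((1/2 : ℝ) • 1 - E) * Rm := by
      rw [hlam1, hZtZ, hZS, hE]
      simp only [Matrix.mul_sub, Matrix.sub_mul, Matrix.mul_add, Matrix.add_mul,
        Matrix.mul_one, Matrix.one_mul, Matrix.mul_smul, Matrix.smul_mul]
      module
    rw [heq]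
    refine key _ (by rw [transpose_sub, hEsymm, transpose_smul, transpose_one]) fun x => ?_
    have h := hnorm x
    have hdd : 0 ≤ x ⬝ᵥ x := Finset.sum_nonneg fun i _ => mul_self_nonneg (x i)
    have : x ⬝ᵥ (((1/2 : ℝ) • 1 - E).mulVec x)
        = (1/2) * (x ⬝ᵥ x) - x ⬝ᵥ E.mulVec x := by
      rw [sub_mulVec, dotProduct_sub, smul_mulVec, one_mulVec, dotProduct_smul]
      simp [smul_eq_mul]
    rw [this]
    have := abs_le.mp h
    linarith [this.2]
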